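/- arXiv:2202.03030 — 2 statements merged into one kernel-verified Lean document; each statement's English description precedes it below -/
import Mathlib

section
/- Let n ≥ 5 be an integer, let F, F' ∈ ℝ, and let α, β, α', β', γ' ∈ ℝ be arbitrary constants. Suppose that for every (T₁, …, Tₙ) ∈ ℝⁿ there exists A ∈ ℝ such that both 0 = α·T₁ + β·T₂ − T₄/(12(n−3)·n!) + (2/(n+2)!)·F·A and 0 = α'·T₁ + β'·T₂ + γ'·T₃ − T₅/(30(n−4)·n!) + (3/(n+3)!)·F'·A hold. Then one obtains a contradiction; i.e., no such F, F' exist. -/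
/-!
Evaluating the equations at T = e₄ gives F · A = (nonzero constant), so F ≠ 0. At T = e₅ the
first equation then forces A = 0, and the second collapses to 1 / (30 (n - 4) n!) = 0.
-/

open Nat

lemma mul_sub_mul_factorial_ne_zero {c k : ℝ} (hc : c ≠ 0) {n : ℕ} (hk : k < n) :
    c * (n - k) * n ! ≠ 0 :=
  mul_ne_zero (mul_ne_zero hc (sub_ne_zero.2 hk.ne')) (by positivity)

/-- the abstract linear-algebra core of Theorem 1.6. Equations I
and II of Proposition 26.2, holding for all values of the free transitivity
parameters T₁,…,Tₙ, are contradictory when n ≥ 5. (T is 0-indexed: T ⟨0,_⟩ = T₁.) -/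
theorem no_homogeneous_models (n : ℕ) (hn : 5 ≤ n) (F F' α β α' β' γ' : ℝ)
    (h : ∀ T : Fin n → ℝ, ∃ A : ℝ,
      (0 = α * T ⟨0, by omega⟩ + β * T ⟨1, by omega⟩
          - T ⟨3, by omega⟩ / (12 * ((n : ℝ) - 3) * (n.factorial : ℝ))
          + (2 / (((n + 2).factorial : ℝ))) * F * A)
      ∧ (0 = α' * T ⟨0, by omega⟩ + β' * T ⟨1, by omega⟩ + γ' * T ⟨2, by omega⟩
          - T ⟨4, by omega⟩ / (30 * ((n : ℝ) - 4) * (n.factorial : ℝ))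
          + (3 / (((n + 3).factorial : ℝ))) * F' * A)) :
    False := by
  have hn' : (5 : ℝ) ≤ n := by exact_mod_cast hn
  have h₃ := mul_sub_mul_factorial_ne_zero (c := 12) (k := 3) (by norm_num) (by linarith)
  have h₄ := mul_sub_mul_factorial_ne_zero (c := 30) (k := 4) (by norm_num) (by linarith)
  obtain ⟨A, hA, -⟩ := h fun i => if (i : ℕ) = 3 then 1 else 0
  obtain ⟨B, hB₁, hB₂⟩ := h fun i => if (i : ℕ) = 4 then 1 else 0
  simp only [Nat.reduceEqDiff, ite_true, ite_false, mul_zero, zero_div, add_zero, zero_sub, one_div]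
    at hA hB₁ hB₂
  have eq₁ : 2 / ((n + 2)! : ℝ) * F * A = (12 * ((n : ℝ) - 3) * n !)⁻¹ := by linarith
  have eq₂ : 2 / ((n + 2)! : ℝ) * F * B = 0 := by linarith
  have eq₃ : 3 / ((n + 3)! : ℝ) * F' * B = (30 * ((n : ℝ) - 4) * n !)⁻¹ := by linarith
  have hF : F ≠ 0 :=
    right_ne_zero_of_mul (left_ne_zero_of_mul (eq₁ ▸ inv_ne_zero h₃))
  have hB : B = 0 := (mul_eq_zero.1 eq₂).resolve_left (mul_ne_zero (by positivity) hF)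
  rw [hB, mul_zero] at eq₃
  exact inv_ne_zero h₄ eq₃.symm
end

section
/- Let n ≥ 2 and let F(x₁, …, xₙ) be a homogeneous polynomial of degree 4 over ℝ. Suppose that for every (T₁, …, Tₙ) ∈ ℝⁿ there exists B₁ ∈ ℝ such that T₁·∂F/∂x₁ + B₁·x₁³/2 + T₂·∂F/∂x₂ + ⋯ + Tₙ·∂F/∂xₙ = 0 identically. Then ∂F/∂x₂ = ⋯ = ∂F/∂xₙ = 0, so F depends only on x₁, i.e. F = c·x₁⁴ for some constant c. -/
open MvPolynomial

/-! Taking `T = eᵢ` shows that every `∂F/∂xᵢ` is a multiple `cᵢ x₁³`. For `i ≠ 1` the partials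
commute, and `∂₁(cᵢ x₁³) = 3cᵢ x₁²` must equal `∂ᵢ(c₁ x₁³) = 0`, so `∂F/∂xᵢ = 0`. Euler's identity
`4F = Σ xᵢ ∂F/∂xᵢ = x₁ ∂F/∂x₁ = c₁ x₁⁴` finishes the proof. -/

namespace MvPolynomial

variable {σ R : Type*}

theorem pderiv_pderiv_comm [CommRing R] (i j : σ) (p : MvPolynomial σ R) :
    pderiv i (pderiv j p) = pderiv j (pderiv i p) := by
  classical
  have hbracket : ⁅pderiv i, pderiv j⁆ = (0 : Derivation R (MvPolynomial σ R) (MvPolynomial σ R)) :=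
    derivation_ext fun k => by
      rw [Derivation.commutator_apply, pderiv_X, pderiv_X, Derivation.zero_apply]
      rw [Pi.single_apply, Pi.single_apply]
      split_ifs <;> simp
  rw [← sub_eq_zero, ← Derivation.commutator_apply, hbracket, Derivation.zero_apply]

theorem pderiv_eq_zero_of_pderiv_eq_C_mul_X_pow [CommRing R] [IsDomain R] [CharZero R]
    {i j : σ} (hij : i ≠ j) {p : MvPolynomial σ R} {a b : R} {k : ℕ} (hk : k ≠ 0)
    (hi : pderiv i p = C a * X j ^ k) (hj : pderiv j p = C b * X j ^ k) :
    pderiv i p = 0 := by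
  have h := pderiv_pderiv_comm j i p
  rw [hi, hj, pderiv_C_mul, pderiv_C_mul, pderiv_pow, pderiv_pow, pderiv_X_self,
    pderiv_X_of_ne hij.symm] at h
  have ha : a = 0 := by simpa [hk, X_ne_zero] using h
  rw [hi, ha, C_0, zero_mul]

theorem IsHomogeneous.nsmul_eq_X_mul_pderiv [CommSemiring R] [Fintype σ]
    {φ : MvPolynomial σ R} {n : ℕ} (hφ : φ.IsHomogeneous n) {j : σ}
    (h : ∀ i, i ≠ j → pderiv i φ = 0) : n • φ = X j * pderiv j φ := by
  rw [← hφ.sum_X_mul_pderiv, Finset.sum_eq_single j (fun i _ hi => by rw [h i hi, mul_zero])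
    (by simp)]

theorem exists_eq_C_mul_of_forall_exists_sum_C_mul_add_C_mul_eq_zero [CommRing R]
    {ι : Type*} [Fintype ι] [DecidableEq ι] {D : ι → MvPolynomial σ R} {P : MvPolynomial σ R}
    (h : ∀ T : ι → R, ∃ B : R, ∑ i, C (T i) * D i + C B * P = 0) (i : ι) :
    ∃ c : R, D i = C c * P := by
  obtain ⟨B, hB⟩ := h (Pi.single i 1)
  refine ⟨-B, ?_⟩
  rw [Finset.sum_eq_single i (fun j _ hj => by simp [Pi.single_eq_of_ne hj]) (by simp)] at hB
  simpa [eq_neg_iff_add_eq_zero] using hB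

end MvPolynomial

/-- Assertion 8.3: if F is homogeneous of degree 4 and for every
choice of the transitivity parameters T₁,…,Tₙ there is B₁ with
Σᵢ Tᵢ·∂F/∂xᵢ + B₁·x₁³/2 = 0, then ∂F/∂xᵢ = 0 for i ≥ 2 and F = c·x₁⁴. -/
theorem quartic_term_depends_only_on_x1 (n : ℕ) (hn : 2 ≤ n)
    (F : MvPolynomial (Fin n) ℝ) (hhom : F.IsHomogeneous 4)
    (h : ∀ T : Fin n → ℝ, ∃ B₁ : ℝ,
      (∑ i, C (T i) * pderiv i F) + C (B₁ / 2) * (X ⟨0, by omega⟩) ^ 3 = 0) :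
    (∀ i : Fin n, i ≠ ⟨0, by omega⟩ → pderiv i F = 0) ∧
      ∃ c : ℝ, F = C c * (X ⟨0, by omega⟩) ^ 4 := by
  set x₁ : Fin n := ⟨0, by omega⟩
  have hcubic : ∀ i, ∃ c : ℝ, pderiv i F = C c * X x₁ ^ 3 :=
    exists_eq_C_mul_of_forall_exists_sum_C_mul_add_C_mul_eq_zero fun T =>
      let ⟨B₁, hB₁⟩ := h T; ⟨B₁ / 2, hB₁⟩
  obtain ⟨c₁, hc₁⟩ := hcubic x₁
  have hvanish : ∀ i, i ≠ x₁ → pderiv i F = 0 := fun i hi =>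
    let ⟨_, hc⟩ := hcubic i
    pderiv_eq_zero_of_pderiv_eq_C_mul_X_pow hi three_ne_zero hc hc₁
  refine ⟨hvanish, c₁ / 4, ?_⟩
  have heuler := hhom.nsmul_eq_X_mul_pderiv hvanish
  rw [hc₁, nsmul_eq_mul, Nat.cast_ofNat] at heuler
  have hC : C (4⁻¹ : ℝ) * 4 = (1 : MvPolynomial (Fin n) ℝ) := by
    rw [← map_ofNat C 4, ← C_mul]; norm_num
  rw [div_eq_mul_inv, C_mul]
  linear_combination C (4⁻¹ : ℝ) * heuler - F * hC
end
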